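/- arXiv:2102.13458 — 7 statements merged into one kernel-verified Lean document; each statement's English description precedes it below -/
import Mathlib

section
/- If G is a 2K_2-free graph, then χ(G) ≤ ω(G)(ω(G)+1)/2. -/
open SimpleGraph

/-- The disjoint union of `p` edges. -/
def pK2 (p : ℕ) : SimpleGraph (Fin p × Fin 2) where
  Adj a b := a.1 = b.1 ∧ a.2 ≠ b.2
  symm := ⟨fun _ _ ⟨h1, h2⟩ => ⟨h1.symm, h2.symm⟩⟩
  loopless := ⟨fun _ ⟨_, h⟩ => h rfl⟩

/-- `G` is `H`-free: no induced subgraph of `G` is isomorphic to `H`. -/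
def IsFreeOf {V W : Type*} (G : SimpleGraph V) (H : SimpleGraph W) : Prop :=
  IsEmpty (H ↪g G)

/-- A graph on `Fin n` with edges given by a list of pairs. -/
def graphOfList (n : ℕ) (l : List (ℕ × ℕ)) : SimpleGraph (Fin n) :=
  SimpleGraph.fromRel (fun a b => ((a : ℕ), (b : ℕ)) ∈ l)

/-!
Fix a maximum clique `K`, of size `ω`. Every vertex `x` has a non-neighbour in `K`; colour
`x` by an unordered pair `{a, b}` of its non-neighbours in `K`, with `a ≠ b` unless `x` has
only one. There are `ω(ω+1)/2` such pairs. If adjacent `x, y` received the same pair `{a, b}`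
with `a ≠ b`, then `xy` and `ab` would induce a `2K₂`; if `a = b`, then `x` and `y` are both
complete to `K \ {a}`, and `(K \ {a}) ∪ {x, y}` is a clique larger than `K`.
-/

theorem Finset.Nonempty.exists_mem_mem_eq_singleton_of_eq {α : Type*} {t : Finset α}
    (ht : t.Nonempty) : ∃ a ∈ t, ∃ b ∈ t, a = b → t = {a} := by
  obtain ⟨a, rfl⟩ | ⟨a, ha, b, hb, hab⟩ := ht.exists_eq_singleton_or_nontrivial
  · exact ⟨a, Finset.mem_singleton_self a, a, Finset.mem_singleton_self a, fun _ => rfl⟩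
  · exact ⟨a, ha, b, hb, fun h => absurd h hab⟩

namespace SimpleGraph

variable {V : Type*} {G : SimpleGraph V}

theorem IsFreeOf.not_adj_of_not_adj_edge (hG : IsFreeOf G (pK2 2)) {x y u v : V}
    (hxy : G.Adj x y) (hxu : ¬G.Adj x u) (hxv : ¬G.Adj x v) (hyu : ¬G.Adj y u)
    (hyv : ¬G.Adj y v) : ¬G.Adj u v := by
  intro huv
  have hxu' : x ≠ u := by rintro rfl; exact hxv huv
  have hxv' : x ≠ v := by rintro rfl; exact hxu huv.symm
  have hyu' : y ≠ u := by rintro rfl; exact hyv huv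
  have hyv' : y ≠ v := by rintro rfl; exact hyu huv.symm
  refine hG.false ⟨⟨fun p => ![![x, y], ![u, v]] p.1 p.2, ?_⟩, ?_⟩
  · intro p q hpq
    fin_cases p <;> fin_cases q <;> simp_all [eq_comm, G.ne_of_adj hxy, G.ne_of_adj huv]
  · intro p q
    fin_cases p <;> fin_cases q <;>
      simp [pK2, hxy, hxy.symm, huv, huv.symm, hxu, hxv, hyu, hyv, G.adj_comm u, G.adj_comm v]

variable [Finite V] {s : Finset V}

theorem IsMaximumClique.exists_not_adj (hs : G.IsMaximumClique s) (x : V) :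
    ∃ v ∈ s, ¬G.Adj x v := by
  classical
  by_contra! hx
  have hK : G.IsNClique (s.card + 1) (insert x s) :=
    (⟨hs.isClique, rfl⟩ : G.IsNClique _ s).insert hx
  have := hs.maximum _ hK.isClique
  rw [hK.card_eq] at this
  omega

theorem IsMaximumClique.not_adj_of_forall_adj_erase [DecidableEq V] (hs : G.IsMaximumClique s)
    {a x y : V} (ha : a ∈ s) (hx : ∀ v ∈ s.erase a, G.Adj x v)
    (hy : ∀ v ∈ s.erase a, G.Adj y v) : ¬G.Adj x y := by
  intro hxy
  have hK : G.IsNClique (s.card - 1 + 1 + 1) (insert x (insert y (s.erase a))) := by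
    refine ((⟨hs.isClique, rfl⟩ : G.IsNClique _ s).erase_of_mem ha |>.insert hy).insert ?_
    rintro v hv
    obtain rfl | hv := Finset.mem_insert.mp hv
    exacts [hxy, hx v hv]
  have := hs.maximum _ hK.isClique
  rw [hK.card_eq] at this
  have := Finset.card_pos.mpr ⟨a, ha⟩
  omega

theorem IsFreeOf.colorable_choose_two (hG : IsFreeOf G (pK2 2)) (hs : G.IsMaximumClique s) :
    G.Colorable ((s.card + 1).choose 2) := by
  classical
  let N : V → Finset s := fun x => Finset.univ.filter fun v => ¬G.Adj x v
  have mem_N {x : V} {v : s} : v ∈ N x ↔ ¬G.Adj x v := by simp [N]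
  have hN (x : V) : (N x).Nonempty := by
    obtain ⟨v, hv, hxv⟩ := hs.exists_not_adj x
    exact ⟨⟨v, hv⟩, mem_N.mpr hxv⟩
  choose a ha b hb hab using fun x => (hN x).exists_mem_mem_eq_singleton_of_eq
  have not_adj_of_mem {x : V} {u : s} (hu : u ∈ s(a x, b x)) : ¬G.Adj x u := by
    obtain rfl | rfl := Sym2.mem_iff.mp hu
    exacts [mem_N.mp (ha x), mem_N.mp (hb x)]
  have adj_of_singleton {x : V} {c : s} (hx : N x = {c}) : ∀ v ∈ s.erase c, G.Adj x v := by
    intro v hv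
    obtain ⟨hvc, hv⟩ := Finset.mem_erase.mp hv
    by_contra hxv
    have : (⟨v, hv⟩ : s) ∈ N x := mem_N.mpr hxv
    rw [hx, Finset.mem_singleton] at this
    exact hvc (congrArg Subtype.val this)
  let C : G.Coloring (Sym2 s) := Coloring.mk (fun x => s(a x, b x)) fun {x y} hxy hc => by
    have hy {u : s} (hu : u ∈ s(a x, b x)) : ¬G.Adj y u := not_adj_of_mem (hc ▸ hu)
    by_cases hd : a x = b x
    · have hdiag : s(a y, b y) = s(a x, a x) := by rw [← hc, ← hd]
      obtain ⟨hay, hby⟩ : a y = a x ∧ b y = a x := by simpa using Sym2.eq_iff.mp hdiag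
      refine hs.not_adj_of_forall_adj_erase (a x).2 (adj_of_singleton (hab x hd))
        (adj_of_singleton ?_) hxy
      rw [hab y (hay.trans hby.symm), hay]
    · exact hG.not_adj_of_not_adj_edge hxy (not_adj_of_mem (Sym2.mem_mk_left _ _))
        (not_adj_of_mem (Sym2.mem_mk_right _ _)) (hy (Sym2.mem_mk_left _ _))
        (hy (Sym2.mem_mk_right _ _)) (hs.isClique (a x).2 (b x).2 (Subtype.val_injective.ne hd))
  simpa [Sym2.card] using C.colorable

end SimpleGraph

theorem chromatic_le_of_2K2_free {V : Type*} [Fintype V] (G : SimpleGraph V)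
    (h : IsFreeOf G (pK2 2)) :
    G.chromaticNumber ≤ ((G.cliqueNum * (G.cliqueNum + 1) / 2 : ℕ) : ℕ∞) := by
  obtain ⟨s, hs⟩ := G.maximumClique_exists
  have hcard : (s.card + 1).choose 2 = G.cliqueNum * (G.cliqueNum + 1) / 2 := by
    rw [G.maximumClique_card_eq_cliqueNum s hs, Nat.choose_two_right, Nat.add_sub_cancel,
      Nat.mul_comm]
  exact hcard ▸ (h.colorable_choose_two hs).chromaticNumber_le
end

section
/- If G is a {2K_2, gem}-free graph, then χ(G) ≤ max{3, ω(G)}. -/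
/-!
If `ω ≤ 2`, pick an edge `xy` and colour `N(x)`, `N(y) \ N(x)` and the rest: the first two
classes are independent because `G` is triangle-free, the third because `G` is `2K₂`-free.

If `ω = n ≥ 3`, fix a maximum clique `K₀, …, Kₙ₋₁`, indexed cyclically. A vertex `v` may take
colour `k` when `v` misses `Kₖ` and either sees `Kₖ₊₁`, or `Kₖ` sees every neighbour of `v`.
A vertex with a neighbour in the clique also misses some `Kᵢ` (by maximality), so going round the
cycle gives an admissible `k`. For a vertex `v` without neighbours in the clique, if every `k`
failed there would be neighbours `wₖ` of `v` missing `Kₖ`; `2K₂`-freeness forces `wₖ` to see all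
other `Kⱼ`, the gem `wₖ Kₗ Kₖ wₗ` with centre `Kₜ` forces the `wₖ` to be pairwise adjacent,
and then `v, w₀, …, wₙ₋₁` is a clique of size `n + 1`. Two adjacent vertices of colour `k` both
use the first alternative (otherwise one of them would see `Kₖ`); the gem with centre `Kₖ₊₁`
makes their neighbourhoods in the clique equal, and then either a `2K₂` or a clique of size
`n + 1` appears.
-/

open SimpleGraph

/-- The gem: `K_1 + P_4`. -/
def gemGraph : SimpleGraph (Fin 5) :=
  graphOfList 5 [(0,1),(1,2),(2,3),(0,4),(1,4),(2,4),(3,4)]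

open Function

theorem Equiv.Perm.SameCycle.exists_not_and_apply {α : Type*} [Finite α] {σ : Equiv.Perm α}
    {x y : α} (hxy : σ.SameCycle x y) {P : α → Prop} (hx : ¬P x) (hy : P y) :
    ∃ z, ¬P z ∧ P (σ z) := by
  by_contra! h
  obtain ⟨i, rfl⟩ := hxy.exists_nat_pow_eq
  exact Set.MapsTo.iterate (s := {z | ¬P z}) h i hx (by rwa [Equiv.Perm.coe_pow] at hy)

section

variable {V : Type*} {G : SimpleGraph V}

theorem IsFreeOf.false_of_induced_two_K2 (h : IsFreeOf G (pK2 2)) {a b c d : V}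
    (hab : G.Adj a b) (hcd : G.Adj c d) (hac : ¬G.Adj a c) (had : ¬G.Adj a d)
    (hbc : ¬G.Adj b c) (hbd : ¬G.Adj b d) : False := by
  have := hab.ne; have := hcd.ne
  have : a ≠ c := by rintro rfl; exact had hcd
  have : a ≠ d := by rintro rfl; exact hac hcd.symm
  have : b ≠ c := by rintro rfl; exact hbd hcd
  have : b ≠ d := by rintro rfl; exact hbc hcd.symm
  refine h.false ⟨⟨fun p => ![![a, b], ![c, d]] p.1 p.2, ?_⟩, ?_⟩
  · rintro ⟨i, x⟩ ⟨j, y⟩ h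
    fin_cases i <;> fin_cases x <;> fin_cases j <;> fin_cases y <;> simp_all [eq_comm]
  · rintro ⟨i, x⟩ ⟨j, y⟩
    fin_cases i <;> fin_cases x <;> fin_cases j <;> fin_cases y <;>
      simp_all [pK2, adj_comm]

theorem IsFreeOf.false_of_induced_gem (h : IsFreeOf G gemGraph) {a b c d e : V}
    (hab : G.Adj a b) (hbc : G.Adj b c) (hcd : G.Adj c d)
    (hac : ¬G.Adj a c) (had : ¬G.Adj a d) (hbd : ¬G.Adj b d)
    (hea : G.Adj e a) (heb : G.Adj e b) (hec : G.Adj e c) (hed : G.Adj e d) : False := by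
  have := hab.ne; have := hbc.ne; have := hcd.ne
  have := hea.ne; have := heb.ne; have := hec.ne; have := hed.ne
  have : a ≠ c := by rintro rfl; exact had hcd
  have : a ≠ d := by rintro rfl; exact hac hcd.symm
  have : b ≠ d := by rintro rfl; exact had hab
  refine h.false ⟨⟨![a, b, c, d, e], ?_⟩, ?_⟩
  · intro i j h
    fin_cases i <;> fin_cases j <;> simp_all [eq_comm]
  · intro i j
    change G.Adj (![a, b, c, d, e] i) (![a, b, c, d, e] j) ↔ gemGraph.Adj i j
    fin_cases i <;> fin_cases j <;>
      simp [gemGraph, graphOfList, adj_comm, hab, hbc, hcd, hac, had, hbd, hea.symm, heb.symm,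
        hec.symm, hed.symm]

end

namespace SimpleGraph

variable {V : Type*} {G : SimpleGraph V}

theorem not_cliqueFree_of_pairwise_adj {m : ℕ} {f : Fin m → V} (hf : Pairwise (G.Adj on f)) :
    ¬G.CliqueFree m :=
  IsContained.not_cliqueFree
    ⟨⟨⟨f, fun hij => hf hij⟩, fun _ _ hij => by_contra fun hne => (hf hne).ne hij⟩⟩

theorem exists_not_adj_of_cliqueFree_succ {n : ℕ} {K : Fin n → V} (hK : Pairwise (G.Adj on K))
    (hfree : G.CliqueFree (n + 1)) (v : V) : ∃ i, ¬G.Adj v (K i) := by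
  by_contra! hv
  refine not_cliqueFree_of_pairwise_adj (f := Fin.cons v K) ?_ hfree
  intro i j hij
  cases i using Fin.cases <;> cases j using Fin.cases
  · exact absurd rfl hij
  · exact hv _
  · exact (hv _).symm
  · exact hK (ne_of_apply_ne Fin.succ hij)

theorem pairwise_adj_update {ι : Type*} [DecidableEq ι] {K : ι → V}
    (hK : Pairwise (G.Adj on K)) {i : ι} {a : V} (ha : ∀ x ≠ i, G.Adj a (K x)) :
    Pairwise (G.Adj on update K i a) := by
  intro x y hxy
  simp only [onFun, update_apply]
  split_ifs with hx hy hy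
  · exact absurd (hx.trans hy.symm) hxy
  · exact ha y hy
  · exact (ha x hx).symm
  · exact hK hxy

theorem cliqueFree_cliqueNum_succ [Finite V] : G.CliqueFree (G.cliqueNum + 1) := fun t ht => by
  have := ht.isClique.card_le_cliqueNum
  rw [ht.card_eq] at this
  omega

theorem colorable_three_of_cliqueFree_three (h2K2 : IsFreeOf G (pK2 2)) (hG : G.CliqueFree 3) :
    G.Colorable 3 := by
  classical
  by_cases hE : ∃ x y, G.Adj x y
  · obtain ⟨x, y, hxy⟩ := hE
    have no_triangle {u a b : V} (hua : G.Adj u a) (hub : G.Adj u b) : ¬G.Adj a b :=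
      fun hab => hG {u, a, b} (is3Clique_triple_iff.2 ⟨hua, hub, hab⟩)
    refine ⟨Coloring.mk (fun v => if G.Adj x v then 0 else if G.Adj y v then 1 else 2)
      fun {a b} hab heq => ?_⟩
    split_ifs at heq
    all_goals first
      | exact absurd heq (by decide)
      | exact no_triangle ‹G.Adj x a› ‹G.Adj x b› hab
      | exact no_triangle ‹G.Adj y a› ‹G.Adj y b› hab
      | exact h2K2.false_of_induced_two_K2 hab hxy (‹¬G.Adj x a› ·.symm) (‹¬G.Adj y a› ·.symm)
          (‹¬G.Adj x b› ·.symm) (‹¬G.Adj y b› ·.symm)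
  · push Not at hE
    exact ⟨Coloring.mk (fun _ => 0) fun hab => (hE _ _ hab).elim⟩

section MaximumClique

variable {n : ℕ} {K : Fin n → V}

def IsAdmissibleColor (G : SimpleGraph V) (K : Fin n → V) (v : V) (k : Fin n) : Prop :=
  ¬G.Adj v (K k) ∧ (G.Adj v (K (finRotate n k)) ∨ ∀ w, G.Adj v w → G.Adj w (K k))

variable (hK : Pairwise (G.Adj on K)) (hfree : G.CliqueFree (n + 1))
include hK hfree

theorem exists_isAdmissibleColor_of_adj (hn : 2 ≤ n) {v : V} {j : Fin n} (hvj : G.Adj v (K j)) :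
    ∃ k, IsAdmissibleColor G K v k := by
  obtain ⟨i, hvi⟩ := exists_not_adj_of_cliqueFree_succ hK hfree v
  have hσ : (finRotate n).SameCycle i j :=
    (isCycle_finRotate_of_le hn).sameCycle
      (Equiv.Perm.mem_support.1 (support_finRotate_of_le hn ▸ Finset.mem_univ i))
      (Equiv.Perm.mem_support.1 (support_finRotate_of_le hn ▸ Finset.mem_univ j))
  obtain ⟨k, hk, hk'⟩ := hσ.exists_not_and_apply (P := fun k => G.Adj v (K k)) hvi hvj
  exact ⟨k, hk, Or.inl hk'⟩

theorem exists_isAdmissibleColor_of_forall_not_adj (h2K2 : IsFreeOf G (pK2 2))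
    (hgem : IsFreeOf G gemGraph) (hn : 3 ≤ n) {v : V} (hv : ∀ j, ¬G.Adj v (K j)) :
    ∃ k, IsAdmissibleColor G K v k := by
  suffices ∃ k, ∀ w, G.Adj v w → G.Adj w (K k) from this.imp fun k hk => ⟨hv k, Or.inr hk⟩
  by_contra! h
  choose w hvw hwK using h
  have hwK' (k j : Fin n) (hjk : j ≠ k) : G.Adj (w k) (K j) := by
    by_contra hkj
    exact h2K2.false_of_induced_two_K2 (hvw k) (hK hjk) (hv j) (hv k) hkj (hwK k)
  have hw : Pairwise (G.Adj on w) := by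
    intro k l hkl
    by_contra hwkl
    obtain ⟨t, htk, htl⟩ := Fin.exists_ne_and_ne_of_two_lt k l hn
    exact hgem.false_of_induced_gem (hwK' k l hkl.symm) (hK hkl.symm) (hwK' l k hkl).symm
      (hwK k) hwkl (fun h => hwK l h.symm) (hwK' k t htk).symm (hK htl) (hK htk)
      (hwK' l t htl).symm
  obtain ⟨k, hk⟩ := exists_not_adj_of_cliqueFree_succ hw hfree v
  exact hk (hvw k)

omit hfree in
theorem adj_of_adj_of_gemFree (hgem : IsFreeOf G gemGraph) {a b : V} {i j x : Fin n}
    (hab : G.Adj a b) (hai : ¬G.Adj a (K i)) (hbi : ¬G.Adj b (K i)) (haj : G.Adj a (K j))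
    (hbj : G.Adj b (K j)) (hbx : G.Adj b (K x)) : G.Adj a (K x) := by
  by_contra hax
  have hxi : x ≠ i := by rintro rfl; exact hbi hbx
  have hjx : j ≠ x := by rintro rfl; exact hax haj
  have hji : j ≠ i := by rintro rfl; exact hai haj
  exact hgem.false_of_induced_gem hab hbx (hK hxi) hax hai hbi haj.symm hbj.symm (hK hjx)
    (hK hji)

theorem not_adj_of_not_adj_of_adj (h2K2 : IsFreeOf G (pK2 2)) (hgem : IsFreeOf G gemGraph)
    {a b : V} {i j : Fin n} (hai : ¬G.Adj a (K i)) (hbi : ¬G.Adj b (K i)) (haj : G.Adj a (K j))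
    (hbj : G.Adj b (K j)) : ¬G.Adj a b := by
  intro hab
  have hsame (x : Fin n) : G.Adj a (K x) ↔ G.Adj b (K x) :=
    ⟨adj_of_adj_of_gemFree hK hgem hab.symm hbi hai hbj haj,
      adj_of_adj_of_gemFree hK hgem hab hai hbi haj hbj⟩
  by_cases h : ∃ x ≠ i, ¬G.Adj a (K x)
  · obtain ⟨x, hxi, hax⟩ := h
    exact h2K2.false_of_induced_two_K2 hab (hK hxi) hax hai ((hsame x).not.1 hax) hbi
  · push Not at h
    -- `a` may replace `K i` in the maximum clique, and `b` sees that new clique entirely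
    obtain ⟨x, hx⟩ := exists_not_adj_of_cliqueFree_succ (pairwise_adj_update hK h) hfree b
    rcases eq_or_ne x i with rfl | hxi
    · exact hx (by simpa using hab.symm)
    · exact hx (by simpa [update_of_ne hxi] using (hsame x).1 (h x hxi))

theorem IsAdmissibleColor.not_adj (h2K2 : IsFreeOf G (pK2 2)) (hgem : IsFreeOf G gemGraph)
    {a b : V} {k : Fin n} (ha : IsAdmissibleColor G K a k) (hb : IsAdmissibleColor G K b k) :
    ¬G.Adj a b := by
  obtain ⟨hak, haσ | ha⟩ := ha
  · obtain ⟨hbk, hbσ | hb⟩ := hb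
    · exact not_adj_of_not_adj_of_adj hK hfree h2K2 hgem hak hbk haσ hbσ
    · exact fun hab => hak (hb a hab.symm)
  · exact fun hab => hb.1 (ha b hab)

theorem colorable_of_pairwise_adj_of_cliqueFree (h2K2 : IsFreeOf G (pK2 2))
    (hgem : IsFreeOf G gemGraph) (hn : 3 ≤ n) : G.Colorable n := by
  have (v : V) : ∃ k, IsAdmissibleColor G K v k := by
    by_cases hv : ∃ j, G.Adj v (K j)
    · obtain ⟨j, hj⟩ := hv
      exact exists_isAdmissibleColor_of_adj hK hfree (by omega) hj
    · push Not at hv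
      exact exists_isAdmissibleColor_of_forall_not_adj hK hfree h2K2 hgem hn hv
  choose c hc using this
  exact ⟨Coloring.mk c fun hab heq => (hc _).not_adj hK hfree h2K2 hgem (heq ▸ hc _) hab⟩

end MaximumClique

end SimpleGraph

theorem chromatic_le_of_2K2_gem_free {V : Type*} [Fintype V] (G : SimpleGraph V)
    (h1 : IsFreeOf G (pK2 2)) (h2 : IsFreeOf G gemGraph) :
    G.chromaticNumber ≤ ((max 3 G.cliqueNum : ℕ) : ℕ∞) := by
  have hfree := G.cliqueFree_cliqueNum_succ
  suffices G.Colorable (max 3 G.cliqueNum) from this.chromaticNumber_le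
  rcases le_or_gt G.cliqueNum 2 with hω | hω
  · exact (colorable_three_of_cliqueFree_three h1 (hfree.mono (by omega))).mono
      (le_max_left _ _)
  · obtain ⟨s, hs⟩ := G.exists_isNClique_cliqueNum
    let K := topEmbeddingOfNotCliqueFree hs.not_cliqueFree
    have hK : Pairwise (G.Adj on K) := fun _ _ hij => K.map_adj_iff.2 hij
    exact (colorable_of_pairwise_adj_of_cliqueFree hK hfree h1 h2 hω).mono (le_max_right _ _)
end

section
/- If G is a {2K_2, K_5−e}-free graph with ω(G) = 4, then χ(G) ≤ 6. -/
/-!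
Take a maximum clique `K = {k₀, k₁, k₂, k₃}`. A vertex outside `K` adjacent to three vertices of
`K` would either complete a `K₅` or, together with the fourth vertex, span a `K₅ - e`; so it misses
two vertices of `K`. For an edge `uv`, the common non-neighbours of `u` and `v`, together with `u`,
form an independent set, since an edge among them would give an induced `2K₂` with `uv`. The six
edges of `K`, oriented so that every `kᵢ` is the tail of one of them, thus give six independent
sets covering all vertices.
-/

open SimpleGraph

/-- `K_5` minus an edge. -/
def K5e : SimpleGraph (Fin 5) :=
  graphOfList 5 [(0,2),(0,3),(0,4),(1,2),(1,3),(1,4),(2,3),(2,4),(3,4)]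

theorem SimpleGraph.cliqueFree_of_cliqueNum_lt {V : Type*} [Finite V] {G : SimpleGraph V} {n : ℕ}
    (h : G.cliqueNum < n) : G.CliqueFree n := fun _ ht => by
  have := ht.isClique.card_le_cliqueNum
  rw [ht.card_eq] at this
  omega

section

open Finset

variable {V : Type*} {G : SimpleGraph V}

theorem not_isFreeOf_of_adj_iff {W : Type*} {H : SimpleGraph W} (f : W → V)
    (hf : Function.Injective f) (hadj : ∀ a b, G.Adj (f a) (f b) ↔ H.Adj a b) :
    ¬IsFreeOf G H :=
  fun h => h.false ⟨⟨f, hf⟩, hadj _ _⟩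

theorem IsFreeOf.isIndepSet_insert_setOf_not_adj (h : IsFreeOf G (pK2 2)) {u v : V}
    (huv : G.Adj u v) : G.IsIndepSet (insert u {x | ¬G.Adj x u ∧ ¬G.Adj x v}) := by
  rintro x (rfl | ⟨hxu, hxv⟩) y (rfl | ⟨hyu, hyv⟩) hne hxy
  · exact hne rfl
  · exact hyu hxy.symm
  · exact hxu hxy
  · refine not_isFreeOf_of_adj_iff (fun a => ![![u, v], ![x, y]] a.1 a.2) ?_ ?_ h
    · rintro ⟨a1, a2⟩ ⟨b1, b2⟩ hab
      fin_cases a1 <;> fin_cases a2 <;> fin_cases b1 <;> fin_cases b2 <;> simp_all [adj_comm]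
    · rintro ⟨a1, a2⟩ ⟨b1, b2⟩
      fin_cases a1 <;> fin_cases a2 <;> fin_cases b1 <;> fin_cases b2 <;>
        simp_all [pK2, adj_comm]

theorem IsFreeOf.adj_of_common_triangle (h : IsFreeOf G K5e) {x y a b c : V} (hxy : x ≠ y)
    (hab : G.Adj a b) (hac : G.Adj a c) (hbc : G.Adj b c)
    (hxa : G.Adj x a) (hxb : G.Adj x b) (hxc : G.Adj x c)
    (hya : G.Adj y a) (hyb : G.Adj y b) (hyc : G.Adj y c) : G.Adj x y := by
  by_contra hnxy
  refine not_isFreeOf_of_adj_iff ![x, y, a, b, c] ?_ ?_ h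
  · intro i j hij
    fin_cases i <;> fin_cases j <;> simp_all [adj_comm]
  · intro i j
    fin_cases i <;> fin_cases j <;> simp_all [K5e, graphOfList, adj_comm]

theorem IsFreeOf.card_filter_adj_le_two [DecidableRel G.Adj] (h : IsFreeOf G K5e) {n : ℕ}
    (hfree : G.CliqueFree (n + 1)) {s : Finset V} (hs : G.IsNClique n s) {x : V} (hx : x ∉ s) :
    #{u ∈ s | G.Adj x u} ≤ 2 := by
  by_contra! hcard
  obtain ⟨a, ha, b, hb, c, hc, hab, hac, hbc⟩ := two_lt_card.mp hcard
  simp only [mem_filter] at ha hb hc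
  obtain ⟨y, hy, hxy⟩ := hs.exists_not_adj_of_cliqueFree_succ hfree x
  have hadj : ∀ {p q}, p ∈ s → q ∈ s → p ≠ q → G.Adj p q := fun hp hq => hs.isClique hp hq
  have hne : ∀ {p}, G.Adj x p → p ≠ y := by rintro p hp rfl; exact hxy hp
  exact hxy (h.adj_of_common_triangle (ne_of_mem_of_not_mem hy hx).symm
    (hadj ha.1 hb.1 hab) (hadj ha.1 hc.1 hac) (hadj hb.1 hc.1 hbc) ha.2 hb.2 hc.2
    (hadj hy ha.1 (hne ha.2).symm) (hadj hy hb.1 (hne hb.2).symm) (hadj hy hc.1 (hne hc.2).symm))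

theorem colorable_of_forall_exists_mem_isIndepSet {ι : Type*} [Fintype ι] (S : ι → Set V)
    (hS : ∀ i, G.IsIndepSet (S i)) (hcover : ∀ x, ∃ i, x ∈ S i) :
    G.Colorable (Fintype.card ι) := by
  choose c hc using hcover
  exact (Coloring.mk c fun {x y} hxy hcxy => hS (c y) (hcxy ▸ hc x) (hc y) hxy.ne hxy).colorable

def fin4Pairs : Fin 6 → Fin 4 × Fin 4 := ![(0, 1), (1, 2), (2, 3), (3, 0), (0, 2), (1, 3)]

theorem fin4Pairs_fst_ne_snd (i : Fin 6) : (fin4Pairs i).1 ≠ (fin4Pairs i).2 := by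
  revert i; decide

theorem exists_fin4Pairs_fst_eq (j : Fin 4) : ∃ i, (fin4Pairs i).1 = j := by
  revert j; decide

theorem exists_fin4Pairs_notMem {A : Finset (Fin 4)} (hA : #A ≤ 2) :
    ∃ i, (fin4Pairs i).1 ∉ A ∧ (fin4Pairs i).2 ∉ A := by
  revert A; decide

theorem colorable_six_of_isNClique_four (h2K2 : IsFreeOf G (pK2 2)) (hK5e : IsFreeOf G K5e)
    (hfree : G.CliqueFree 5) {s : Finset V} (hs : G.IsNClique 4 s) : G.Colorable 6 := by
  classical
  let e := s.equivFinOfCardEq hs.card_eq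
  let k : Fin 4 → V := fun j => e.symm j
  have hk : ∀ {i j}, i ≠ j → G.Adj (k i) (k j) := fun hij =>
    hs.isClique (e.symm _).2 (e.symm _).2 (by simpa [k, Subtype.ext_iff] using hij)
  let S i := insert (k (fin4Pairs i).1)
    {x | ¬G.Adj x (k (fin4Pairs i).1) ∧ ¬G.Adj x (k (fin4Pairs i).2)}
  have hS : ∀ i, G.IsIndepSet (S i) := fun i =>
    h2K2.isIndepSet_insert_setOf_not_adj (hk (fin4Pairs_fst_ne_snd i))
  refine colorable_of_forall_exists_mem_isIndepSet S hS fun x => ?_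
  by_cases hx : x ∈ s
  · obtain ⟨i, hi⟩ := exists_fin4Pairs_fst_eq (e ⟨x, hx⟩)
    exact ⟨i, by simp [S, k, hi]⟩
  · have hA : #{j | G.Adj x (k j)} ≤ 2 :=
      (card_le_card_of_injOn k (fun j hj => by simp_all [k]) (by simp [k, Set.InjOn])).trans
        (hK5e.card_filter_adj_le_two hfree hs hx)
    obtain ⟨i, hi⟩ := exists_fin4Pairs_notMem hA
    exact ⟨i, Or.inr (by simpa using hi)⟩

end

theorem chromatic_le_six_of_2K2_K5e_free {V : Type*} [Fintype V] (G : SimpleGraph V)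
    (h1 : IsFreeOf G (pK2 2)) (h2 : IsFreeOf G K5e) (hω : G.cliqueNum = 4) :
    G.chromaticNumber ≤ 6 := by
  obtain ⟨s, hs⟩ := G.exists_isNClique_cliqueNum
  rw [hω] at hs
  exact (colorable_six_of_isNClique_four h1 h2 (cliqueFree_of_cliqueNum_lt (by omega)) hs)
    |>.chromaticNumber_le
end

section
/- If G is a {2K_2, K_5−e}-free graph with ω(G) ≥ 5, then χ(G) = ω(G). -/
/-!
Let `K` be a maximum clique, of size `ω ≥ 5`. A vertex `v ∉ K` misses some `c ∈ K`, so by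
`K₅ - e`-freeness it has at most two neighbours in `K`. If `u w ∉ K` are adjacent, `2K₂`-freeness
leaves at most one vertex of `K` adjacent to neither, whence `ω = 5` and `u`, `w` have disjoint
pairs of neighbours in `K`. Colour `K` by itself, a vertex outside `K` with a neighbour outside
`K` by a colour chosen from its pair of neighbours in `K` through a suitable colouring of the
Petersen graph `K(5,2)`, and any other vertex outside `K` by a vertex of `K` it misses.
-/

open SimpleGraph

open Finset

lemma Finset.card_eq_five_of_card_sdiff_union_le_one {α : Type*} [DecidableEq α]
    {K A B : Finset α} (hA : A ⊆ K) (hB : B ⊆ K) (hA2 : #A ≤ 2) (hB2 : #B ≤ 2) (hK : 5 ≤ #K)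
    (h : #(K \ (A ∪ B)) ≤ 1) :
    #K = 5 ∧ #A = 2 ∧ #B = 2 ∧ Disjoint A B := by
  rw [card_sdiff_of_subset (union_subset hA hB)] at h
  have := card_union_add_card_inter A B
  have := card_le_card (union_subset hA hB)
  rw [disjoint_iff_inter_eq_empty, ← card_eq_zero]
  omega

/-- A proper colouring of the Petersen graph `K(5,2)` in which every 2-set gets a colour outside
itself. -/
def petersenColoring (s : Finset (Fin 5)) : Fin 5 :=
  if s = {0,1} then 2 else if s = {0,2} then 1 else if s = {0,3} then 1
  else if s = {0,4} then 1 else if s = {1,2} then 3 else if s = {1,3} then 0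
  else if s = {1,4} then 0 else if s = {2,3} then 4 else if s = {2,4} then 3
  else if s = {3,4} then 0 else 0

lemma petersenColoring_notMem : ∀ s : Finset (Fin 5), #s = 2 → petersenColoring s ∉ s := by
  decide

lemma petersenColoring_ne : ∀ s t : Finset (Fin 5), #s = 2 → #t = 2 → Disjoint s t →
    petersenColoring s ≠ petersenColoring t := by
  decide

lemma Finset.exists_petersenColoring {α : Type*} [DecidableEq α] {K : Finset α}
    (hK : #K = 5) :
    ∃ f : Finset α → α, ∀ s ⊆ K, #s = 2 →
      f s ∈ K \ s ∧ ∀ t ⊆ K, #t = 2 → Disjoint s t → f s ≠ f t := by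
  let g : Fin 5 ↪ α := (K.equivFinOfCardEq hK).symm.toEmbedding.trans (.subtype _)
  have hKg : K = univ.map g := by
    simp only [g, ← Finset.map_map, map_univ_equiv, univ_eq_attach, attach_map_val]
  refine ⟨fun s => g (petersenColoring {i | g i ∈ s}), fun s hs hs2 => ?_⟩
  rw [hKg] at hs ⊢
  obtain ⟨s, -, rfl⟩ := subset_map_iff.1 hs
  rw [card_map] at hs2
  refine ⟨by simpa using petersenColoring_notMem s hs2, fun t ht ht2 hst => ?_⟩
  obtain ⟨t, -, rfl⟩ := subset_map_iff.1 ht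
  rw [card_map] at ht2
  simpa using petersenColoring_ne s t hs2 ht2 ((disjoint_map g).1 hst)

namespace SimpleGraph

variable {V : Type*} {G : SimpleGraph V}

lemma nonempty_K5e_embedding {v c x y z : V}
    (hvx : G.Adj v x) (hvy : G.Adj v y) (hvz : G.Adj v z) (hvc : ¬ G.Adj v c) (hvc' : v ≠ c)
    (hcx : G.Adj c x) (hcy : G.Adj c y) (hcz : G.Adj c z)
    (hxy : G.Adj x y) (hxz : G.Adj x z) (hyz : G.Adj y z) :
    Nonempty (K5e ↪g G) := by
  have := hvx.ne; have := hvy.ne; have := hvz.ne; have := hcx.ne; have := hcy.ne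
  have := hcz.ne; have := hxy.ne; have := hxz.ne; have := hyz.ne
  have hcv : ¬ G.Adj c v := fun h => hvc h.symm
  have hinj : Function.Injective ![v, c, x, y, z] := fun a b hab => by
    fin_cases a <;> fin_cases b <;> simp_all
  refine ⟨⟨⟨_, hinj⟩, fun {a b} => ?_⟩⟩
  fin_cases a <;> fin_cases b <;>
    simp [K5e, graphOfList, *, hvx.symm, hvy.symm, hvz.symm, hcx.symm, hcy.symm, hcz.symm,
      hxy.symm, hxz.symm, hyz.symm]

lemma nonempty_pK2_two_embedding {u v a b : V} (huv : G.Adj u v) (hab : G.Adj a b)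
    (hua : ¬ G.Adj u a) (hub : ¬ G.Adj u b) (hva : ¬ G.Adj v a) (hvb : ¬ G.Adj v b)
    (nua : u ≠ a) (nub : u ≠ b) (nva : v ≠ a) (nvb : v ≠ b) :
    Nonempty (pK2 2 ↪g G) := by
  have := huv.ne; have := hab.ne
  refine ⟨⟨⟨fun p => ![![u, v], ![a, b]] p.1 p.2, fun ⟨p, i⟩ ⟨q, j⟩ h => ?_⟩, fun {p q} => ?_⟩⟩
  · fin_cases p <;> fin_cases i <;> fin_cases q <;> fin_cases j <;> simp_all
  · obtain ⟨p, i⟩ := p; obtain ⟨q, j⟩ := q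
    fin_cases p <;> fin_cases i <;> fin_cases q <;> fin_cases j <;>
      simp [pK2, *, G.adj_comm a u, G.adj_comm b u, G.adj_comm a v, G.adj_comm b v,
        G.adj_comm v u, G.adj_comm b a]

section Clique

variable {K : Finset V}

lemma colorable_card_of_coloring_outside (c : V → V)
    (hc : ∀ v ∉ K, c v ∈ K ∧ ¬ G.Adj v (c v))
    (hc' : ∀ u w, u ∉ K → w ∉ K → G.Adj u w → c u ≠ c w) : G.Colorable #K := by
  classical
  have hmem : ∀ v, (if v ∈ K then v else c v) ∈ K := fun v => by
    split_ifs with hv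
    exacts [hv, (hc v hv).1]
  refine Fintype.card_coe K ▸
    (Coloring.mk (fun v => ⟨_, hmem v⟩) fun {a b} hab heq => ?_).colorable
  simp only [Subtype.mk.injEq] at heq
  split_ifs at heq with ha hb hb
  · exact hab.ne heq
  · exact (hc b hb).2 (heq ▸ hab.symm)
  · exact (hc a ha).2 (heq ▸ hab)
  · exact hc' a b ha hb hab heq

lemma IsMaximumClique.exists_not_adj_s6 [Finite V] (hK : G.IsMaximumClique K) {v : V}
    (hv : v ∉ K) :
    ∃ k ∈ K, ¬ G.Adj v k := by
  classical
  by_contra! h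
  have := hK.maximum (insert v K) <| by
    rw [coe_insert]
    exact hK.isClique.insert fun k hk _ => h k hk
  rw [card_insert_of_notMem hv] at this
  omega

variable [DecidableRel G.Adj]

lemma card_filter_adj_le_two_of_K5e_free (hG : IsFreeOf G K5e) (hK : G.IsClique K) {v c : V}
    (hv : v ∉ K) (hc : c ∈ K) (hvc : ¬ G.Adj v c) :
    #{k ∈ K | G.Adj v k} ≤ 2 := by
  classical
  by_contra! h
  obtain ⟨t, hts, ht⟩ := exists_subset_card_eq h
  obtain ⟨x, y, z, hxy, hxz, hyz, rfl⟩ := card_eq_three.1 ht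
  simp only [insert_subset_iff, singleton_subset_iff, mem_filter] at hts
  obtain ⟨⟨hx, hvx⟩, ⟨hy, hvy⟩, ⟨hz, hvz⟩⟩ := hts
  have hcK : ∀ {k}, k ∈ K → G.Adj v k → G.Adj c k := fun hk hvk =>
    hK hc hk fun hck => hvc (hck ▸ hvk)
  exact hG.false (nonempty_K5e_embedding hvx hvy hvz hvc (ne_of_mem_of_not_mem hc hv).symm
    (hcK hx hvx) (hcK hy hvy) (hcK hz hvz) (hK hx hy hxy) (hK hx hz hxz) (hK hy hz hyz)).some

lemma card_filter_not_adj_le_one_of_2K2_free (hG : IsFreeOf G (pK2 2)) (hK : G.IsClique K)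
    {u w : V} (hu : u ∉ K) (hw : w ∉ K) (huw : G.Adj u w) :
    #{k ∈ K | ¬ G.Adj u k ∧ ¬ G.Adj w k} ≤ 1 := by
  classical
  by_contra! h
  obtain ⟨t, hts, ht⟩ := exists_subset_card_eq h
  obtain ⟨a, b, hab, rfl⟩ := card_eq_two.1 ht
  simp only [insert_subset_iff, singleton_subset_iff, mem_filter] at hts
  obtain ⟨⟨ha, hua, hwa⟩, ⟨hb, hub, hwb⟩⟩ := hts
  exact hG.false (nonempty_pK2_two_embedding huw (hK ha hb hab) hua hub hwa hwb
    (ne_of_mem_of_not_mem ha hu).symm (ne_of_mem_of_not_mem hb hu).symm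
    (ne_of_mem_of_not_mem ha hw).symm (ne_of_mem_of_not_mem hb hw).symm).some

variable [Finite V] (h2K2 : IsFreeOf G (pK2 2)) (hK5e : IsFreeOf G K5e)
include h2K2 hK5e

lemma IsMaximumClique.card_eq_five_of_adj (hK : G.IsMaximumClique K) (h5 : 5 ≤ #K) {u w : V}
    (hu : u ∉ K) (hw : w ∉ K) (huw : G.Adj u w) :
    #K = 5 ∧ #{k ∈ K | G.Adj u k} = 2 ∧ #{k ∈ K | G.Adj w k} = 2 ∧
      Disjoint {k ∈ K | G.Adj u k} {k ∈ K | G.Adj w k} := by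
  classical
  have hle : ∀ {v}, v ∉ K → #{k ∈ K | G.Adj v k} ≤ 2 := fun hv => by
    obtain ⟨c, hc, hvc⟩ := hK.exists_not_adj_s6 hv
    exact card_filter_adj_le_two_of_K5e_free hK5e hK.isClique hv hc hvc
  refine card_eq_five_of_card_sdiff_union_le_one (filter_subset _ _) (filter_subset _ _)
    (hle hu) (hle hw) h5 ?_
  convert card_filter_not_adj_le_one_of_2K2_free h2K2 hK.isClique hu hw huw using 2
  ext k
  simp only [mem_sdiff, mem_union, mem_filter]
  tauto

lemma IsMaximumClique.colorable_card (hK : G.IsMaximumClique K) (h5 : 5 ≤ #K) :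
    G.Colorable #K := by
  classical
  choose! c hcK hc using fun v (hv : v ∉ K) => hK.exists_not_adj_s6 hv
  by_cases hS : ∃ u w, u ∉ K ∧ w ∉ K ∧ G.Adj u w
  swap
  · exact colorable_card_of_coloring_outside c (fun v hv => ⟨hcK v hv, hc v hv⟩)
      fun u w hu hw huw => (hS ⟨u, w, hu, hw, huw⟩).elim
  obtain ⟨u, w, hu, hw, huw⟩ := hS
  obtain ⟨f, hf⟩ :=
    exists_petersenColoring (hK.card_eq_five_of_adj h2K2 hK5e h5 hu hw huw).1
  refine colorable_card_of_coloring_outside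
    (fun v => if #{k ∈ K | G.Adj v k} = 2 then f {k ∈ K | G.Adj v k} else c v) ?_ ?_
  · intro v hv
    split_ifs with h2
    · obtain ⟨hfK, hfN⟩ := mem_sdiff.1 (hf _ (filter_subset _ _) h2).1
      exact ⟨hfK, fun hadj => hfN (mem_filter.2 ⟨hfK, hadj⟩)⟩
    · exact ⟨hcK v hv, hc v hv⟩
  · intro u w hu hw huw
    obtain ⟨-, hu2, hw2, hdisj⟩ := hK.card_eq_five_of_adj h2K2 hK5e h5 hu hw huw
    simp only [hu2, hw2, if_true]
    exact (hf _ (filter_subset _ _) hu2).2 _ (filter_subset _ _) hw2 hdisj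

end Clique

end SimpleGraph

theorem chromatic_eq_of_2K2_K5e_free {V : Type*} [Fintype V] (G : SimpleGraph V)
    (h1 : IsFreeOf G (pK2 2)) (h2 : IsFreeOf G K5e) (hω : 5 ≤ G.cliqueNum) :
    G.chromaticNumber = (G.cliqueNum : ℕ∞) := by
  classical
  obtain ⟨K, hK⟩ := G.maximumClique_exists
  have hcard := G.maximumClique_card_eq_cliqueNum K hK
  refine le_antisymm ?_ G.cliqueNum_le_chromaticNumber
  rw [← hcard] at hω ⊢
  exact (hK.colorable_card h1 h2 hω).chromaticNumber_le
end

section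
/- If G is a {2K_2, K_1+C_4}-free graph with ω(G) ≥ 3, then χ(G) ≤ ω(G) + 1. -/
open SimpleGraph

/-- The 4-wheel `K_1 + C_4`. -/
def K1C4 : SimpleGraph (Fin 5) :=
  graphOfList 5 [(0,1),(1,2),(2,3),(3,0),(0,4),(1,4),(2,4),(3,4)]

/-! Fix a maximum clique `K` and write `N v = G.nonNeighborsIn K v` for the vertices of `K` missed
by `v ∉ K`; `N v` is nonempty by maximality. For adjacent `v, w ∉ K`, `2K₂`-freeness gives
`|N v ∩ N w| ≤ 1`, and `K₁ + C₄`-freeness gives `N v ∪ N w = K` as soon as neither set contains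
the other. Two adjacent vertices with `|N v| = |N w| = 1` miss different vertices of `K` (or they
would extend the rest of `K` to a larger clique), so `K = N v ∪ N w` would have two elements; as
`|K| ≥ 3`, the vertices with `|N v| = 1` are independent and share one new colour. Every other `v` takes the colour of some `x ∈ N v` whose successor in a fixed cyclic
order of `K` lies outside `N v`; adjacent `v, w` cannot choose the same `x`, because its successor
lies in `K = N v ∪ N w`. -/

open Finset

section InducedSubgraphs

variable {V : Type*} {G : SimpleGraph V}

lemma IsFreeOf.no_induced_2K2 (hG : IsFreeOf G (pK2 2)) {a b c d : V}
    (hab : G.Adj a b) (hcd : G.Adj c d)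
    (hac : ¬G.Adj a c) (had : ¬G.Adj a d) (hbc : ¬G.Adj b c) (hbd : ¬G.Adj b d) : False := by
  have hac' : a ≠ c := by rintro rfl; exact had hcd
  have had' : a ≠ d := by rintro rfl; exact hac hcd.symm
  have hbc' : b ≠ c := by rintro rfl; exact hbd hcd
  have hbd' : b ≠ d := by rintro rfl; exact hbc hcd.symm
  refine hG.false ⟨⟨fun p => ![![a, b], ![c, d]] p.1 p.2, ?_⟩, @fun x y => ?_⟩
  · simp [Function.Injective, Fin.forall_fin_two, hab.ne, hcd.ne, hac', had', hbc', hbd',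
      hab.ne.symm, hcd.ne.symm, hac'.symm, had'.symm, hbc'.symm, hbd'.symm]
  · rcases x with ⟨i, j⟩
    rcases y with ⟨k, l⟩
    fin_cases i <;> fin_cases j <;> fin_cases k <;> fin_cases l <;>
      simp [pK2, hab, hcd, hab.symm, hcd.symm, hac, had, hbc, hbd, G.adj_comm]

lemma IsFreeOf.no_induced_K1C4 (hG : IsFreeOf G K1C4) {a b c d z : V}
    (hab : G.Adj a b) (hbc : G.Adj b c) (hcd : G.Adj c d) (hda : G.Adj d a)
    (hza : G.Adj z a) (hzb : G.Adj z b) (hzc : G.Adj z c) (hzd : G.Adj z d)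
    (hac : ¬G.Adj a c) (hbd : ¬G.Adj b d) (hac' : a ≠ c) (hbd' : b ≠ d) : False := by
  refine hG.false ⟨⟨![a, b, c, d, z], List.nodup_ofFn.mp ?_⟩, @fun x y => ?_⟩
  · simp [hab.ne, hac', hda.ne.symm, hza.ne.symm, hbc.ne, hbd', hzb.ne.symm, hcd.ne,
      hzc.ne.symm, hzd.ne.symm]
  · fin_cases x <;> fin_cases y <;>
      simp [K1C4, graphOfList, hab, hbc, hcd, hda, hza, hzb, hzc, hzd, hac, hbd, G.adj_comm,
        hda.symm, hza.symm, hzb.symm, hzc.symm, hzd.symm]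

end InducedSubgraphs

lemma Equiv.Perm.IsCycleOn.exists_mem_apply_notMem {α : Type*} {f : Equiv.Perm α}
    {K L : Finset α} (hf : f.IsCycleOn K) (hLK : L ⊆ K) (hL : L.Nonempty) (hne : L ≠ K) :
    ∃ x ∈ L, f x ∉ L := by
  by_contra! hclosed
  obtain ⟨a, ha⟩ := hL
  obtain ⟨b, hbK, hbL⟩ := exists_of_ssubset (hLK.ssubset_of_ne hne)
  obtain ⟨n, -, rfl⟩ := hf.exists_pow_eq (hLK ha) hbK
  rw [Equiv.Perm.coe_pow] at hbL
  exact hbL (Set.MapsTo.iterate (s := (L : Set α)) hclosed n ha)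

namespace SimpleGraph

variable {V : Type*} {G : SimpleGraph V}

section NonNeighborsIn

variable [DecidableRel G.Adj] {K : Finset V} {u v w : V}

def nonNeighborsIn (G : SimpleGraph V) [DecidableRel G.Adj] (K : Finset V) (v : V) : Finset V :=
  {u ∈ K | ¬G.Adj v u}

lemma mem_nonNeighborsIn : u ∈ G.nonNeighborsIn K v ↔ u ∈ K ∧ ¬G.Adj v u := mem_filter

lemma nonNeighborsIn_subset : G.nonNeighborsIn K v ⊆ K := filter_subset _ _

lemma adj_of_mem_of_notMem_nonNeighborsIn (hu : u ∈ K) (hv : u ∉ G.nonNeighborsIn K v) :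
    G.Adj v u := by
  by_contra h
  exact hv (mem_nonNeighborsIn.2 ⟨hu, h⟩)

variable [DecidableEq V]

lemma nonNeighborsIn_nonempty [Finite V] (hK : G.IsMaximumClique K) (hv : v ∉ K) :
    (G.nonNeighborsIn K v).Nonempty := by
  by_contra! h
  have hclique : G.IsClique (insert v K : Finset V) := by
    rw [coe_insert]
    exact hK.isClique.insert fun u hu _ => adj_of_mem_of_notMem_nonNeighborsIn hu (by simp [h])
  have := hK.maximum _ hclique
  rw [card_insert_of_notMem hv] at this
  omega

/-- Otherwise `v`, `w` and the rest of `K` would form a larger clique. -/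
lemma one_lt_card_nonNeighborsIn_union [Finite V] (hK : G.IsMaximumClique K) (hv : v ∉ K)
    (hw : w ∉ K) (hvw : G.Adj v w) :
    1 < #(G.nonNeighborsIn K v ∪ G.nonNeighborsIn K w) := by
  by_contra! h
  set C := K \ (G.nonNeighborsIn K v ∪ G.nonNeighborsIn K w)
  have hCK : #K ≤ #C + 1 := card_le_card_sdiff_add_card.trans (Nat.add_le_add_left h _)
  have hC : ∀ u ∈ C, u ∈ K ∧ G.Adj v u ∧ G.Adj w u := fun u hu => by
    rw [mem_sdiff, mem_union, not_or] at hu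
    exact ⟨hu.1, adj_of_mem_of_notMem_nonNeighborsIn hu.1 hu.2.1,
      adj_of_mem_of_notMem_nonNeighborsIn hu.1 hu.2.2⟩
  have hclique : G.IsClique (insert v (insert w C) : Finset V) := by
    simp only [coe_insert]
    refine ((hK.isClique.subset (by simp [C])).insert fun u hu _ => (hC u hu).2.2).insert ?_
    rintro u (rfl | hu) _
    exacts [hvw, (hC u hu).2.1]
  have hwC : w ∉ C := fun h => hw (hC w h).1
  have hvC : v ∉ insert w C := by
    rw [mem_insert, not_or]
    exact ⟨hvw.ne, fun h => hv (hC v h).1⟩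
  have := hK.maximum _ hclique
  rw [card_insert_of_notMem hvC, card_insert_of_notMem hwC] at this
  omega

lemma card_nonNeighborsIn_inter_le_one (hG : IsFreeOf G (pK2 2)) (hK : G.IsClique K)
    (hvw : G.Adj v w) : #(G.nonNeighborsIn K v ∩ G.nonNeighborsIn K w) ≤ 1 := by
  by_contra! h
  obtain ⟨a, ha, b, hb, hab⟩ := one_lt_card.1 h
  simp only [mem_inter, mem_nonNeighborsIn] at ha hb
  exact hG.no_induced_2K2 hvw (hK ha.1.1 hb.1.1 hab) ha.1.2 hb.1.2 ha.2.2 hb.2.2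

/-- A vertex `a` missed only by `v`, a vertex `c` missed only by `w` and a vertex `z ∈ K` missed by
neither would form the 4-cycle `v w a c` with hub `z`. -/
lemma nonNeighborsIn_union_eq (hG : IsFreeOf G K1C4) (hK : G.IsClique K) (hv : v ∉ K)
    (hw : w ∉ K) (hvw : G.Adj v w) (hvw' : ¬G.nonNeighborsIn K v ⊆ G.nonNeighborsIn K w)
    (hwv : ¬G.nonNeighborsIn K w ⊆ G.nonNeighborsIn K v) :
    G.nonNeighborsIn K v ∪ G.nonNeighborsIn K w = K := by
  refine (union_subset nonNeighborsIn_subset nonNeighborsIn_subset).antisymm fun z hz => ?_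
  by_contra hzN
  rw [mem_union, not_or] at hzN
  obtain ⟨a, haV, haW⟩ := not_subset.1 hvw'
  obtain ⟨c, hcW, hcV⟩ := not_subset.1 hwv
  have hac : a ≠ c := by rintro rfl; exact haW hcW
  have haz : a ≠ z := by rintro rfl; exact hzN.1 haV
  have hcz : c ≠ z := by rintro rfl; exact hzN.2 hcW
  rw [mem_nonNeighborsIn] at haV hcW
  exact hG.no_induced_K1C4 hvw (adj_of_mem_of_notMem_nonNeighborsIn haV.1 haW)
    (hK haV.1 hcW.1 hac) (adj_of_mem_of_notMem_nonNeighborsIn hcW.1 hcV).symm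
    (adj_of_mem_of_notMem_nonNeighborsIn hz hzN.1).symm
    (adj_of_mem_of_notMem_nonNeighborsIn hz hzN.2).symm
    (hK hz haV.1 haz.symm) (hK hz hcW.1 hcz.symm) haV.2 hcW.2
    (by rintro rfl; exact hv haV.1) (by rintro rfl; exact hw hcW.1)

lemma not_adj_of_card_nonNeighborsIn_eq_one [Finite V] (hG : IsFreeOf G K1C4)
    (hK : G.IsMaximumClique K) (hK3 : 3 ≤ #K) (hv : v ∉ K) (hw : w ∉ K)
    (hv1 : #(G.nonNeighborsIn K v) = 1) (hw1 : #(G.nonNeighborsIn K w) = 1) : ¬G.Adj v w := by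
  intro hvw
  have hunion := one_lt_card_nonNeighborsIn_union hK hv hw hvw
  have not_subset_of_card_eq_one {s t : Finset V} (hs : #s = 1) (ht : #t = 1)
      (hst : 1 < #(s ∪ t)) : ¬s ⊆ t := fun h => by
    rw [union_eq_right.2 h] at hst
    omega
  have hK2 := card_union_le (G.nonNeighborsIn K v) (G.nonNeighborsIn K w)
  rw [nonNeighborsIn_union_eq hG hK.isClique hv hw hvw (not_subset_of_card_eq_one hv1 hw1 hunion)
    (not_subset_of_card_eq_one hw1 hv1 (union_comm (G.nonNeighborsIn K v) _ ▸ hunion))] at hK2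
  omega

lemma not_subset_nonNeighborsIn_of_adj (hG : IsFreeOf G (pK2 2)) (hK : G.IsClique K)
    (hvw : G.Adj v w) (hv2 : 2 ≤ #(G.nonNeighborsIn K v)) :
    ¬G.nonNeighborsIn K v ⊆ G.nonNeighborsIn K w := fun h => by
  have := card_nonNeighborsIn_inter_le_one hG hK hvw
  rw [inter_eq_left.2 h] at this
  omega

/-- `f x` lies in `K = N v ∪ N w`, so it cannot escape both `N v` and `N w`. -/
lemma ne_of_apply_notMem_nonNeighborsIn {f : V → V} {x y : V} (hG₁ : IsFreeOf G (pK2 2))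
    (hG₂ : IsFreeOf G K1C4) (hK : G.IsClique K) (hf : Set.MapsTo f K K) (hv : v ∉ K)
    (hw : w ∉ K) (hvw : G.Adj v w) (hv2 : 2 ≤ #(G.nonNeighborsIn K v))
    (hw2 : 2 ≤ #(G.nonNeighborsIn K w)) (hx : x ∈ K)
    (hfx : G.nonNeighborsIn K v ≠ K → f x ∉ G.nonNeighborsIn K v)
    (hfy : G.nonNeighborsIn K w ≠ K → f y ∉ G.nonNeighborsIn K w) : x ≠ y := by
  rintro rfl
  have hvw' := not_subset_nonNeighborsIn_of_adj hG₁ hK hvw hv2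
  have hwv := not_subset_nonNeighborsIn_of_adj hG₁ hK hvw.symm hw2
  have hfK : f x ∈ G.nonNeighborsIn K v ∪ G.nonNeighborsIn K w := by
    rw [nonNeighborsIn_union_eq hG₂ hK hv hw hvw hvw' hwv]
    exact hf hx
  rcases mem_union.1 hfK with h | h
  · exact hfx (fun hvK => hwv (nonNeighborsIn_subset.trans hvK.superset)) h
  · exact hfy (fun hwK => hvw' (nonNeighborsIn_subset.trans hwK.superset)) h

end NonNeighborsIn

/-- Colour `K` injectively, the vertices missing exactly one vertex of `K` by one extra colour,
and every other `v ∉ K` by the colour of `pick v`. -/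
theorem colorable_card_add_one_of_pick [DecidableEq V] [DecidableRel G.Adj] {K : Finset V}
    (pick : ∀ v, v ∉ K → V) (hpick : ∀ v hv, pick v hv ∈ G.nonNeighborsIn K v)
    (hind : ∀ {v w}, v ∉ K → w ∉ K → #(G.nonNeighborsIn K v) = 1 →
      #(G.nonNeighborsIn K w) = 1 → ¬G.Adj v w)
    (hpick_ne : ∀ {v w} (hv : v ∉ K) (hw : w ∉ K), G.Adj v w → #(G.nonNeighborsIn K v) ≠ 1 →
      #(G.nonNeighborsIn K w) ≠ 1 → pick v hv ≠ pick w hw) :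
    G.Colorable (#K + 1) := by
  let color (v : V) : Option K :=
    if hv : v ∈ K then some ⟨v, hv⟩
    else if #(G.nonNeighborsIn K v) = 1 then none
    else some ⟨pick v hv, nonNeighborsIn_subset (hpick v hv)⟩
  have color_ne_of_mem {v w : V} (hv : v ∈ K) (hw : w ∉ K) (hvw : G.Adj v w) :
      color v ≠ color w := by
    simp only [color, dif_pos hv, dif_neg hw]
    split_ifs
    · simp
    · simp only [ne_eq, Option.some.injEq, Subtype.mk.injEq]
      rintro rfl
      exact (mem_nonNeighborsIn.1 (hpick w hw)).2 hvw.symm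
  refine (Coloring.mk color fun {v w} hvw => ?_).colorable.mono (by simp)
  by_cases hv : v ∈ K <;> by_cases hw : w ∈ K
  · simpa [color, hv, hw] using hvw.ne
  · exact color_ne_of_mem hv hw hvw
  · exact (color_ne_of_mem hw hv hvw.symm).symm
  · simp only [color, dif_neg hv, dif_neg hw]
    split_ifs with hv1 hw1 hw1
    · exact (hind hv hw hv1 hw1 hvw).elim
    · simp
    · simp
    · simpa using hpick_ne hv hw hvw hv1 hw1

theorem colorable_card_add_one_of_isFreeOf [Fintype V] (hG₁ : IsFreeOf G (pK2 2))
    (hG₂ : IsFreeOf G K1C4) {K : Finset V} (hK : G.IsMaximumClique K) (hK3 : 3 ≤ #K) : G.Colorable (#K + 1) := by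
  classical
  obtain ⟨f, hf, -⟩ := K.exists_cycleOn
  have hpick (v : V) (hv : v ∉ K) : ∃ x ∈ G.nonNeighborsIn K v,
      G.nonNeighborsIn K v ≠ K → f x ∉ G.nonNeighborsIn K v := by
    obtain ⟨x, hx⟩ := nonNeighborsIn_nonempty hK hv
    by_cases hvK : G.nonNeighborsIn K v = K
    · exact ⟨x, hx, fun h => (h hvK).elim⟩
    · obtain ⟨y, hy, hfy⟩ := hf.exists_mem_apply_notMem nonNeighborsIn_subset ⟨x, hx⟩ hvK
      exact ⟨y, hy, fun _ => hfy⟩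
  choose pick hpick hpick_apply using hpick
  have two_le {u} (hu : u ∉ K) (hu1 : #(G.nonNeighborsIn K u) ≠ 1) :
      2 ≤ #(G.nonNeighborsIn K u) := by
    have := (nonNeighborsIn_nonempty hK hu).card_pos
    omega
  exact colorable_card_add_one_of_pick pick hpick
    (not_adj_of_card_nonNeighborsIn_eq_one hG₂ hK hK3) fun hv hw hvw hv1 hw1 =>
      ne_of_apply_notMem_nonNeighborsIn hG₁ hG₂ hK.isClique hf.1.mapsTo hv hw hvw
        (two_le hv hv1) (two_le hw hw1) (nonNeighborsIn_subset (hpick _ hv))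
        (hpick_apply _ hv) (hpick_apply _ hw)

end SimpleGraph

theorem chromatic_le_of_2K2_K1C4_free {V : Type*} [Fintype V] (G : SimpleGraph V)
    (h1 : IsFreeOf G (pK2 2)) (h2 : IsFreeOf G K1C4) (hω : 3 ≤ G.cliqueNum) :
    G.chromaticNumber ≤ ((G.cliqueNum + 1 : ℕ) : ℕ∞) := by
  obtain ⟨K, hK⟩ := maximumClique_exists (G := G)
  rw [← maximumClique_card_eq_cliqueNum K hK] at hω ⊢
  exact (colorable_card_add_one_of_isFreeOf h1 h2 hK hω).chromaticNumber_le
end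

section
/- The Mycielskian μ(K_n) of the complete graph K_n (n ≥ 3) is {2K_2, K_1+C_4}-free and satisfies χ(μ(K_n)) = n + 1. -/
open SimpleGraph

/-- The Mycielskian of a graph `G`: vertices `V ∪ V' ∪ {u}`, with the edges of `G`,
an edge `x y'` for every edge `x y` of `G`, and `u` joined to every vertex of `V'`. -/
def mycielskian {V : Type*} (G : SimpleGraph V) : SimpleGraph (V ⊕ V ⊕ Unit) :=
  SimpleGraph.fromRel (fun a b =>
    match a, b with
    | .inl x, .inl y => G.Adj x y
    | .inl x, .inr (.inl y) => G.Adj x y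
    | .inr (.inl _), .inr (.inr _) => True
    | _, _ => False)

/-!
A `(k + 1)`-colouring of `μ(G)` gives a `k`-colouring of `G`: recolour every vertex that has the
apex colour with the colour of its copy, which is adjacent to the apex. Hence `χ(μ(G)) = χ(G) + 1`.

In `μ(K_n)` every neighbourhood is a split graph (the clique `V` together with the independent
set `V'` or `{u}`), and a split graph has no induced `C_4`, so `μ(K_n)` contains no induced wheel.
-/

namespace SimpleGraph

variable {V : Type*} {G : SimpleGraph V} {n : ℕ} {x y : V} {t t' : Unit}

@[simp] lemma mycielskian_adj_inl_inl :
    (mycielskian G).Adj (.inl x) (.inl y) ↔ G.Adj x y := by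
  simp only [mycielskian, fromRel_adj]
  exact ⟨fun h => h.2.elim id .symm, fun h => ⟨by simpa using h.ne, .inl h⟩⟩

@[simp] lemma mycielskian_adj_inl_inr_inl :
    (mycielskian G).Adj (.inl x) (.inr (.inl y)) ↔ G.Adj x y := by
  simp [mycielskian]

@[simp] lemma mycielskian_adj_inr_inl_inl :
    (mycielskian G).Adj (.inr (.inl x)) (.inl y) ↔ G.Adj x y := by
  simp [mycielskian, G.adj_comm]

@[simp] lemma mycielskian_adj_inr_inl_inr_inr :
    (mycielskian G).Adj (.inr (.inl x)) (.inr (.inr t)) := by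
  simp [mycielskian]

@[simp] lemma mycielskian_adj_inr_inr_inr_inl :
    (mycielskian G).Adj (.inr (.inr t)) (.inr (.inl x)) := by
  simp [mycielskian]

@[simp] lemma mycielskian_not_adj_inl_inr_inr :
    ¬(mycielskian G).Adj (.inl x) (.inr (.inr t)) := by
  simp [mycielskian]

@[simp] lemma mycielskian_not_adj_inr_inr_inl :
    ¬(mycielskian G).Adj (.inr (.inr t)) (.inl x) := by
  simp [mycielskian]

@[simp] lemma mycielskian_not_adj_inr_inl_inr_inl :
    ¬(mycielskian G).Adj (.inr (.inl x)) (.inr (.inl y)) := by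
  simp [mycielskian]

@[simp] lemma mycielskian_not_adj_inr_inr_inr_inr :
    ¬(mycielskian G).Adj (.inr (.inr t)) (.inr (.inr t')) := by
  simp [mycielskian]

theorem Colorable.mycielskian (h : G.Colorable n) : (_root_.mycielskian G).Colorable (n + 1) := by
  obtain ⟨C⟩ := h
  let C' : (_root_.mycielskian G).Coloring (Option (Fin n)) := Coloring.mk
    (fun | .inl x => some (C x) | .inr (.inl x) => some (C x) | .inr (.inr _) => none)
    (by rintro (x | x | _) (y | y | _) hxy <;> simp_all [C.valid])
  simpa using C'.colorable

theorem Colorable.of_mycielskian (h : (_root_.mycielskian G).Colorable (n + 1)) :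
    G.Colorable n := by
  obtain ⟨C⟩ := h
  set apex := C (.inr (.inr ()))
  let c (x : V) : Fin (n + 1) := if C (.inl x) = apex then C (.inr (.inl x)) else C (.inl x)
  have c_ne_apex (x : V) : c x ≠ apex := by
    unfold c
    split_ifs with hx
    · exact C.valid (by simp)
    · exact hx
  have c_valid {x y : V} (hxy : G.Adj x y) : c x ≠ c y := by
    have h₁ : C (.inl x) ≠ C (.inl y) := C.valid (by simpa)
    have h₂ : C (.inr (.inl x)) ≠ C (.inl y) := C.valid (by simpa using hxy)
    have h₃ : C (.inl x) ≠ C (.inr (.inl y)) := C.valid (by simpa)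
    unfold c
    split_ifs <;> simp_all
  let C' : G.Coloring {a // a ≠ apex} :=
    Coloring.mk (fun x => ⟨c x, c_ne_apex x⟩) fun hxy => by simpa using c_valid hxy
  simpa [Fintype.card_subtype_compl] using C'.colorable

theorem chromaticNumber_mycielskian :
    (mycielskian G).chromaticNumber = G.chromaticNumber + 1 := by
  refine le_antisymm ?_ ?_
  · induction h : G.chromaticNumber using ENat.recTopCoe with
    | top => simp
    | coe k =>
      exact_mod_cast (chromaticNumber_le_iff_colorable.mp h.le).mycielskian.chromaticNumber_le
  · refine le_iInf₂ ?_
    rintro (_ | k) hk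
    · exact (colorable_zero_iff.mp hk).false (.inr (.inr ())) |>.elim
    · simpa using add_le_add_right hk.of_mycielskian.chromaticNumber_le 1

/-- `G` induces a split graph on `s`. -/
def IsSplitOn (G : SimpleGraph V) (s : Set V) : Prop :=
  ∃ K I : Set V, G.IsClique K ∧ G.IsIndepSet I ∧ s ⊆ K ∪ I

theorem IsSplitOn.adj_or_adj_of_cycle_four {s : Set V} (hs : G.IsSplitOn s) {a b c d : V}
    (ha : a ∈ s) (hb : b ∈ s) (hc : c ∈ s) (hd : d ∈ s)
    (hab : G.Adj a b) (hbc : G.Adj b c) (hcd : G.Adj c d) (hda : G.Adj d a)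
    (hac : a ≠ c) (hbd : b ≠ d) : G.Adj a c ∨ G.Adj b d := by
  obtain ⟨K, I, hK, hI, hsKI⟩ := hs
  by_contra! ⟨nac, nbd⟩
  have mem_indep {p q : V} (hp : p ∈ s) (hq : q ∈ s) (hpq : p ≠ q) (npq : ¬G.Adj p q) :
      p ∈ I ∨ q ∈ I := by
    rcases hsKI hp with hp | hp
    · rcases hsKI hq with hq | hq
      · exact absurd (hK hp hq hpq) npq
      · exact .inr hq
    · exact .inl hp
  have not_adj {p q : V} (hp : p ∈ I) (hq : q ∈ I) (hpq : G.Adj p q) : False :=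
    hI hp hq hpq.ne hpq
  rcases mem_indep ha hc hac nac with ha' | hc' <;>
    rcases mem_indep hb hd hbd nbd with hb' | hd'
  · exact not_adj ha' hb' hab
  · exact not_adj ha' hd' hda.symm
  · exact not_adj hc' hb' hbc.symm
  · exact not_adj hc' hd' hcd

theorem isFreeOf_pK2_two
    (h : ∀ a b c d, G.Adj a b → G.Adj c d → ¬G.Adj a c → ¬G.Adj a d → ¬G.Adj b c → ¬G.Adj b d →
      False) :
    IsFreeOf G (pK2 2) := by
  refine ⟨fun f => h (f (0, 0)) (f (0, 1)) (f (1, 0)) (f (1, 1)) ?_ ?_ ?_ ?_ ?_ ?_⟩ <;>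
    simp only [f.map_adj_iff] <;> simp [pK2]

theorem isFreeOf_K1C4 (h : ∀ v, G.IsSplitOn (G.neighborSet v)) : IsFreeOf G K1C4 := by
  refine ⟨fun f => ?_⟩
  have hK1C4 : K1C4.Adj 0 1 ∧ K1C4.Adj 1 2 ∧ K1C4.Adj 2 3 ∧ K1C4.Adj 3 0 ∧
      K1C4.Adj 4 0 ∧ K1C4.Adj 4 1 ∧ K1C4.Adj 4 2 ∧ K1C4.Adj 4 3 ∧
      ¬K1C4.Adj 0 2 ∧ ¬K1C4.Adj 1 3 := by
    simp [K1C4, graphOfList]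
  obtain ⟨h01, h12, h23, h30, h40, h41, h42, h43, n02, n13⟩ := hK1C4
  have := (h (f 4)).adj_or_adj_of_cycle_four (f.map_adj_iff.2 h40) (f.map_adj_iff.2 h41)
    (f.map_adj_iff.2 h42) (f.map_adj_iff.2 h43) (f.map_adj_iff.2 h01) (f.map_adj_iff.2 h12)
    (f.map_adj_iff.2 h23) (f.map_adj_iff.2 h30) (f.injective.ne (by decide))
    (f.injective.ne (by decide))
  simp only [f.map_adj_iff] at this
  tauto

lemma mycielskian_isIndepSet_range_inr_inl :
    (mycielskian G).IsIndepSet (Set.range (Sum.inr ∘ Sum.inl)) := by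
  rintro _ ⟨x, rfl⟩ _ ⟨y, rfl⟩ -
  simp

lemma mycielskian_top_isClique_range_inl :
    (mycielskian (⊤ : SimpleGraph V)).IsClique (Set.range Sum.inl) := by
  rintro _ ⟨x, rfl⟩ _ ⟨y, rfl⟩ hxy
  simpa using hxy

theorem mycielskian_top_isSplitOn_neighborSet (v : V ⊕ V ⊕ Unit) :
    (mycielskian (⊤ : SimpleGraph V)).IsSplitOn ((mycielskian ⊤).neighborSet v) := by
  rcases v with x | x | _
  · refine ⟨_, _, mycielskian_top_isClique_range_inl, mycielskian_isIndepSet_range_inr_inl, ?_⟩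
    rintro (y | y | _) h <;> simp_all
  · refine ⟨_, {.inr (.inr ())}, mycielskian_top_isClique_range_inl,
      Set.pairwise_singleton _ _, ?_⟩
    rintro (y | y | _) h <;> simp_all
  · refine ⟨∅, _, isClique_empty, mycielskian_isIndepSet_range_inr_inl, ?_⟩
    rintro (y | y | _) h <;> simp_all

/- `V` is a clique and every edge avoiding `V` is an apex edge `u y'`; so one edge is `u y'`, the
other is `x z` or `x z'` with `x ∈ V`, and then `y'` sees `x` or `z`, or `u` sees `z'`. -/
theorem mycielskian_top_no_induced_two_edges {a b c d : V ⊕ V ⊕ Unit}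
    (hab : (mycielskian ⊤).Adj a b) (hcd : (mycielskian ⊤).Adj c d)
    (hac : ¬(mycielskian ⊤).Adj a c) (had : ¬(mycielskian ⊤).Adj a d)
    (hbc : ¬(mycielskian ⊤).Adj b c) (hbd : ¬(mycielskian ⊤).Adj b d) : False := by
  rcases a with a | a | _ <;> rcases b with b | b | _ <;> rcases c with c | c | _ <;>
    rcases d with d | d | _ <;> simp_all

end SimpleGraph

theorem mycielskian_completeGraph_free_and_chromatic_general (n : ℕ) :
    IsFreeOf (mycielskian (completeGraph (Fin n))) (pK2 2) ∧
    IsFreeOf (mycielskian (completeGraph (Fin n))) K1C4 ∧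
    (mycielskian (completeGraph (Fin n))).chromaticNumber = ((n + 1 : ℕ) : ℕ∞) := by
  refine ⟨isFreeOf_pK2_two fun _ _ _ _ => mycielskian_top_no_induced_two_edges,
    isFreeOf_K1C4 mycielskian_top_isSplitOn_neighborSet, ?_⟩
  rw [chromaticNumber_mycielskian, chromaticNumber_top, Fintype.card_fin]
  exact (Nat.cast_succ n).symm

theorem mycielskian_completeGraph_free_and_chromatic (n : ℕ) (hn : 3 ≤ n) :
    IsFreeOf (mycielskian (completeGraph (Fin n))) (pK2 2) ∧
    IsFreeOf (mycielskian (completeGraph (Fin n))) K1C4 ∧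
    (mycielskian (completeGraph (Fin n))).chromaticNumber = ((n + 1 : ℕ) : ℕ∞) :=
  mycielskian_completeGraph_free_and_chromatic_general n
end

section
/- Let G be a gem-free graph with maximum clique A = {v_1,…,v_ω}, and let C_{i,j} (for i < j) be the set of vertices outside A nonadjacent to both v_i and v_j and not lying in any earlier C_{i',j'} in lexicographic order. Then for j ≥ 3, the induced subgraph on C_{i,j} is P_4-free, and hence perfect. -/
open SimpleGraph

/-- The path on 4 vertices. -/
def P4 : SimpleGraph (Fin 4) :=
  graphOfList 4 [(0,1),(1,2),(2,3)]

/-- A graph is perfect if every induced subgraph has chromatic number equal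
to its clique number. -/
def IsPerfect {V : Type*} (G : SimpleGraph V) : Prop :=
  ∀ S : Set V, (G.induce S).chromaticNumber = ((G.induce S).cliqueNum : ℕ∞)

/-!
A vertex of `C i j` is nonadjacent to `v i`; if it also missed some `v k` with `k < j`, `k ≠ i`,
it would already lie in the lexicographically earlier set of the pair `{i, k}`. So for `j ≥ 2`
the set `C i j` lies in the neighbourhood of a single vertex `v k`, and an induced `P₄` there
would form a gem with `v k`.

Perfectness is Seinsche's theorem. In a `P₄`-free graph every maximal clique meets every
maximal independent set `I`: otherwise take `i ∈ I` with the most neighbours in the clique `K`,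
a vertex `k' ∈ K` missed by `i`, a neighbour `i' ∈ I` of `k'`, and `k ∈ K` seen by `i` but not
by `i'`; then `i' k' k i` is an induced `P₄`. So deleting `I` lowers the clique number, and
induction colours the graph with `ω` colours.
-/

section Embeddings

variable {U V W : Type*} {G : SimpleGraph V} {H : SimpleGraph W}

lemma IsFreeOf.of_embedding {G' : SimpleGraph U} (h : IsFreeOf G H) (f : G' ↪g G) :
    IsFreeOf G' H :=
  ⟨fun e => h.false (f.comp e)⟩

lemma IsFreeOf.induce (h : IsFreeOf G H) (s : Set V) : IsFreeOf (G.induce s) H :=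
  h.of_embedding (Embedding.induce s)

/-- Distinct neighbourhoods in `H` make a map reflecting adjacency injective. -/
lemma not_isFreeOf_of_adj_iff_s12 (hH : ∀ m n, m ≠ n → ∃ p, ¬(H.Adj m p ↔ H.Adj n p))
    {f : W → V} (hf : ∀ m n, G.Adj (f m) (f n) ↔ H.Adj m n) : ¬IsFreeOf G H := by
  refine fun hfree => hfree.false ⟨⟨f, fun m n hmn => ?_⟩, hf _ _⟩
  by_contra hne
  obtain ⟨p, hp⟩ := hH m n hne
  exact hp (by rw [← hf, ← hf, hmn])

lemma P4_exists_adj_ne : ∀ m n : Fin 4, m ≠ n → ∃ p, ¬(P4.Adj m p ↔ P4.Adj n p) := by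
  simp only [P4, graphOfList, fromRel_adj]
  decide

lemma gemGraph_exists_adj_ne :
    ∀ m n : Fin 5, m ≠ n → ∃ p, ¬(gemGraph.Adj m p ↔ gemGraph.Adj n p) := by
  simp only [gemGraph, graphOfList, fromRel_adj]
  decide

lemma gemGraph_adj_castSucc :
    ∀ m n : Fin 4, gemGraph.Adj m.castSucc n.castSucc ↔ P4.Adj m n := by
  simp only [P4, gemGraph, graphOfList, fromRel_adj]
  decide

lemma gemGraph_adj_last : ∀ m : Fin 4, gemGraph.Adj (Fin.last 4) m.castSucc := by
  simp only [gemGraph, graphOfList, fromRel_adj]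
  decide

lemma not_isFreeOf_P4 {a b c d : V} (hab : G.Adj a b) (hbc : G.Adj b c) (hcd : G.Adj c d)
    (hac : ¬G.Adj a c) (had : ¬G.Adj a d) (hbd : ¬G.Adj b d) : ¬IsFreeOf G P4 := by
  refine not_isFreeOf_of_adj_iff_s12 P4_exists_adj_ne (f := ![a, b, c, d]) fun m n => ?_
  fin_cases m <;> fin_cases n <;>
    simp [P4, graphOfList, hab, hbc, hcd, hac, had, hbd, hab.symm, hbc.symm, hcd.symm,
      G.adj_comm c a, G.adj_comm d a, G.adj_comm d b]

lemma IsFreeOf.induce_neighborSet (hgem : IsFreeOf G gemGraph) (w : V) :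
    IsFreeOf (G.induce (G.neighborSet w)) P4 := by
  refine ⟨fun e => not_isFreeOf_of_adj_iff_s12 gemGraph_exists_adj_ne
    (f := Fin.snoc (fun m => (e m : V)) w) (fun m n => ?_) hgem⟩
  have hw : ∀ m, G.Adj w (e m) := fun m => (e m).2
  induction m using Fin.lastCases <;> induction n using Fin.lastCases <;>
    simp only [Fin.snoc_last, Fin.snoc_castSucc]
  · simp
  · exact iff_of_true (hw _) (gemGraph_adj_last _)
  · exact iff_of_true (hw _).symm (gemGraph_adj_last _).symm
  · rw [gemGraph_adj_castSucc]
    exact e.map_adj_iff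

end Embeddings

section Seinsche

variable {V : Type*} {G : SimpleGraph V}

lemma exists_not_adj_of_maximal_isClique {K : Set V} (hK : Maximal G.IsClique K) {w : V}
    (hw : w ∉ K) : ∃ u ∈ K, ¬G.Adj w u := by
  by_contra! h
  exact hw (hK.2 (hK.1.insert fun u hu _ => h u hu) (Set.subset_insert w K) (Set.mem_insert w K))

lemma exists_adj_of_maximal_isIndepSet {I : Set V} (hI : Maximal G.IsIndepSet I) {w : V}
    (hw : w ∉ I) : ∃ u ∈ I, G.Adj w u := by
  by_contra! h
  have hins : G.IsIndepSet (insert w I) :=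
    hI.1.insert fun u hu _ => ⟨h u hu, fun h' => h u hu h'.symm⟩
  exact hw (hI.2 hins (Set.subset_insert w I) (Set.mem_insert w I))

lemma nonempty_of_maximal_isIndepSet [Nonempty V] {I : Set V} (hI : Maximal G.IsIndepSet I) :
    I.Nonempty := by
  obtain ⟨w⟩ := ‹Nonempty V›
  by_cases hw : w ∈ I
  · exact ⟨w, hw⟩
  · obtain ⟨u, hu, -⟩ := exists_adj_of_maximal_isIndepSet hI hw
    exact ⟨u, hu⟩

theorem IsFreeOf.inter_nonempty_of_maximal [Finite V] (hfree : IsFreeOf G P4) {K I : Set V}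
    (hK : Maximal G.IsClique K) (hI : Maximal G.IsIndepSet I) (hIne : I.Nonempty) :
    (K ∩ I).Nonempty := by
  by_contra hKI
  have hdisj : ∀ x ∈ K, x ∉ I := fun x hxK hxI => hKI ⟨x, hxK, hxI⟩
  obtain ⟨i, hiI, hmax⟩ :=
    I.exists_max_image (fun x => (K ∩ G.neighborSet x).ncard) I.toFinite hIne
  obtain ⟨k', hk'K, hik'⟩ := exists_not_adj_of_maximal_isClique hK fun h => hdisj i h hiI
  obtain ⟨i', hi'I, hk'i'⟩ := exists_adj_of_maximal_isIndepSet hI (hdisj k' hk'K)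
  have hnsub : ¬K ∩ G.neighborSet i ⊆ K ∩ G.neighborSet i' := fun hsub =>
    (hmax i' hi'I).not_gt <| Set.ncard_lt_ncard <|
      (Set.ssubset_iff_of_subset hsub).2 ⟨k', ⟨hk'K, hk'i'.symm⟩, fun h => hik' h.2⟩
  obtain ⟨k, ⟨hkK, hik⟩, hi'k⟩ := Set.not_subset.1 hnsub
  have hk'k : G.Adj k' k := hK.1 hk'K hkK fun h => hik' (h ▸ hik)
  have hi'i : ¬G.Adj i' i := by
    rcases eq_or_ne i' i with rfl | hne
    · exact G.irrefl
    · exact hI.1 hi'I hiI hne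
  exact not_isFreeOf_P4 hk'i'.symm hk'k hik.symm (fun h => hi'k ⟨hkK, h⟩) hi'i
    (fun h => hik' h.symm) hfree

theorem IsFreeOf.cliqueNum_induce_compl_lt [Finite V] [Nonempty V] (hfree : IsFreeOf G P4)
    {I : Set V} (hI : Maximal G.IsIndepSet I) : (G.induce Iᶜ).cliqueNum < G.cliqueNum := by
  classical
  obtain ⟨t, ht⟩ := (G.induce Iᶜ).exists_isNClique_cliqueNum
  rw [isNClique_induce_iff] at ht
  set s := t.map (.subtype _)
  have hsI : ∀ x ∈ s, x ∉ I := by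
    simp only [s, Finset.mem_map, Function.Embedding.subtype_apply]
    rintro _ ⟨x, -, rfl⟩
    exact x.2
  obtain ⟨K, hsK, hK⟩ := Finite.exists_le_maximal (p := G.IsClique) ht.isClique
  obtain ⟨x, hxK, hxI⟩ :=
    hfree.inter_nonempty_of_maximal hK hI (nonempty_of_maximal_isIndepSet hI)
  have hxs : ∀ y ∈ s, G.Adj x y := fun y hy =>
    hK.1 hxK (hsK hy) fun hxy => hsI y hy (hxy ▸ hxI)
  have hins := ht.insert hxs
  have hle := hins.isClique.card_le_cliqueNum
  rwa [hins.card_eq] at hle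

lemma Colorable.of_induce_compl {I : Set V} (hI : G.IsIndepSet I) {n : ℕ}
    (hc : (G.induce Iᶜ).Colorable n) : G.Colorable (n + 1) := by
  classical
  obtain ⟨c⟩ := hc
  refine ⟨Coloring.mk
    (fun x => if h : x ∈ I then Fin.last n else (c ⟨x, h⟩).castSucc) fun {x y} hxy => ?_⟩
  by_cases hx : x ∈ I <;> by_cases hy : y ∈ I <;> simp only [hx, hy, dite_true, dite_false]
  · exact absurd hxy (hI hx hy hxy.ne)
  · exact (Fin.castSucc_lt_last _).ne'
  · exact (Fin.castSucc_lt_last _).ne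
  · exact (c.valid (v := ⟨x, hx⟩) (w := ⟨y, hy⟩) hxy) ∘ (Fin.castSucc_injective _ ·)

theorem IsFreeOf.colorable_cliqueNum [Finite V] (hfree : IsFreeOf G P4) :
    G.Colorable G.cliqueNum := by
  induction hn : Nat.card V using Nat.strong_induction_on generalizing V with
  | _ n ih =>
  cases isEmpty_or_nonempty V
  · exact .of_isEmpty _
  obtain ⟨I, -, hI⟩ := Finite.exists_le_maximal (p := G.IsIndepSet) (a := ∅) (by simp)
  obtain ⟨x, hx⟩ := nonempty_of_maximal_isIndepSet hI
  have hcard : Nat.card ↥Iᶜ < n := hn ▸ Finite.card_subtype_lt (not_not.2 hx)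
  have hcol := ih _ hcard (hfree.induce Iᶜ) rfl
  have hlt := hfree.cliqueNum_induce_compl_lt hI
  simpa [Nat.sub_add_cancel (Nat.one_le_of_lt hlt)] using
    Colorable.of_induce_compl hI.1 (hcol.mono (Nat.le_sub_one_of_lt hlt))

theorem IsFreeOf.chromaticNumber_eq_cliqueNum [Finite V] (hfree : IsFreeOf G P4) :
    G.chromaticNumber = G.cliqueNum :=
  le_antisymm hfree.colorable_cliqueNum.chromaticNumber_le cliqueNum_le_chromaticNumber

theorem IsFreeOf.isPerfect [Finite V] (hfree : IsFreeOf G P4) : IsPerfect G :=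
  fun S => (hfree.induce S).chromaticNumber_eq_cliqueNum

end Seinsche

section LexFirstNonNeighbours

variable {V ι : Type*} [LinearOrder ι]

/-- The paper's sets `C_{i,j}`, characterised by their recursion over lexicographically ordered
pairs `i < j`. -/
def IsLexNonNeighbourSets (G : SimpleGraph V) (v : ι → V) (C : ι → ι → Set V) : Prop :=
  ∀ i j : ι, i < j →
    C i j =
      {x | x ∉ Set.range v ∧ x ∉ G.neighborSet (v i) ∧ x ∉ G.neighborSet (v j)} \
        ⋃ (q : {q : ι × ι // q.1 < q.2 ∧ (q.1 < i ∨ (q.1 = i ∧ q.2 < j))}), C q.1.1 q.1.2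

variable {G : SimpleGraph V} {v : ι → V} {C : ι → ι → Set V}

lemma exists_lex_le_mem_of_not_adj
    (hC : IsLexNonNeighbourSets G v C)
    {a b : ι} (hab : a < b) {x : V} (hxv : x ∉ Set.range v) (hxa : x ∉ G.neighborSet (v a))
    (hxb : x ∉ G.neighborSet (v b)) :
    ∃ q : ι × ι, q.1 < q.2 ∧ toLex q ≤ toLex (a, b) ∧ x ∈ C q.1 q.2 := by
  by_cases hx : x ∈ C a b
  · exact ⟨(a, b), hab, le_rfl, hx⟩
  rw [hC a b hab, Set.mem_sdiff, not_and, not_not] at hx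
  obtain ⟨⟨q, hq, hlt⟩, hxq⟩ := Set.mem_iUnion.1 (hx ⟨hxv, hxa, hxb⟩)
  exact ⟨q, hq, (Prod.Lex.toLex_lt_toLex.2 hlt).le, hxq⟩

lemma subset_neighborSet_of_lt
    (hC : IsLexNonNeighbourSets G v C)
    {i j k : ι} (hij : i < j) (hkj : k < j) (hki : k ≠ i) : C i j ⊆ G.neighborSet (v k) := by
  intro x hx
  rw [hC i j hij] at hx
  obtain ⟨⟨hxv, hxi, -⟩, hxU⟩ := hx
  by_contra hxk
  obtain ⟨q, hq, hqlt, hxq⟩ :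
      ∃ q : ι × ι, q.1 < q.2 ∧ toLex q < toLex (i, j) ∧ x ∈ C q.1 q.2 := by
    rcases hki.lt_or_gt with hki | hik
    · obtain ⟨q, hq, hle, hxq⟩ := exists_lex_le_mem_of_not_adj hC hki hxv hxk hxi
      exact ⟨q, hq, hle.trans_lt (Prod.Lex.toLex_lt_toLex.2 (.inl hki)), hxq⟩
    · obtain ⟨q, hq, hle, hxq⟩ := exists_lex_le_mem_of_not_adj hC hik hxv hxi hxk
      exact ⟨q, hq, hle.trans_lt (Prod.Lex.toLex_lt_toLex.2 (.inr ⟨rfl, hkj⟩)), hxq⟩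
  exact hxU (Set.mem_iUnion.2 ⟨⟨q, hq, Prod.Lex.toLex_lt_toLex.1 hqlt⟩, hxq⟩)

end LexFirstNonNeighbours

theorem Cij_P4_free_of_gem_free_general {V : Type*} [Fintype V] (G : SimpleGraph V)
    (hgem : IsFreeOf G gemGraph)
    (v : Fin G.cliqueNum → V)
    (C : Fin G.cliqueNum → Fin G.cliqueNum → Set V)
    (hC : ∀ i j : Fin G.cliqueNum, i < j →
      C i j =
        {x | x ∉ Set.range v ∧ x ∉ G.neighborSet (v i) ∧ x ∉ G.neighborSet (v j)} \
          ⋃ (q : {q : Fin G.cliqueNum × Fin G.cliqueNum //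
              q.1 < q.2 ∧ (q.1 < i ∨ (q.1 = i ∧ q.2 < j))}), C q.1.1 q.1.2)
    (i j : Fin G.cliqueNum) (hij : i < j) (hj : 2 ≤ (j : ℕ)) :
    IsFreeOf (G.induce (C i j)) P4 ∧ IsPerfect (G.induce (C i j)) := by
  obtain ⟨k, hkj, hki⟩ :=
    Finset.exists_mem_ne (s := Finset.Iio j) (by rw [Fin.card_Iio]; omega) i
  have hP4 : IsFreeOf (G.induce (C i j)) P4 :=
    (hgem.induce_neighborSet (v k)).of_embedding
      (G.induceHomOfLE (subset_neighborSet_of_lt hC hij (Finset.mem_Iio.1 hkj) hki))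
  exact ⟨hP4, hP4.isPerfect⟩

/-- For a gem-free graph `G` with maximum clique `{v 0, …, v (ω-1)}` and the sets
`C i j` defined in lexicographic order, for `i < j` with `j` at least the third
index, the induced subgraph on `C i j` is `P₄`-free, and hence perfect. -/
theorem Cij_P4_free_of_gem_free {V : Type*} [Fintype V] (G : SimpleGraph V)
    (hgem : IsFreeOf G gemGraph)
    (v : Fin G.cliqueNum → V) (hinj : Function.Injective v)
    (hclique : G.IsClique (Set.range v))
    (C : Fin G.cliqueNum → Fin G.cliqueNum → Set V)
    (hC : ∀ i j : Fin G.cliqueNum, i < j →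
      C i j =
        {x | x ∉ Set.range v ∧ x ∉ G.neighborSet (v i) ∧ x ∉ G.neighborSet (v j)} \
          ⋃ (q : {q : Fin G.cliqueNum × Fin G.cliqueNum //
              q.1 < q.2 ∧ (q.1 < i ∨ (q.1 = i ∧ q.2 < j))}), C q.1.1 q.1.2)
    (i j : Fin G.cliqueNum) (hij : i < j) (hj : 2 ≤ (j : ℕ)) :
    IsFreeOf (G.induce (C i j)) P4 ∧ IsPerfect (G.induce (C i j)) :=
  Cij_P4_free_of_gem_free_general G hgem v C hC i j hij hj
end
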